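/- Let H be a finite-dimensional complex inner product space, let ψ and φ be unit vectors in H that are linearly independent, and let p, q > 0. Then the self-adjoint operator Δ := p|ψ⟩⟨ψ| − q|φ⟩⟨φ| admits a decomposition Δ = λ₊|u⟩⟨u| + λ₋|v⟩⟨v| where u and v are orthonormal vectors in H and λ₊ > 0 > λ₋; i.e., Δ has rank two with exactly one positive and one negative eigenvalue. -/

import Mathlib

open Matrix
open scoped ComplexOrder Kronecker

/-- The trace norm `‖Y‖₁ = Tr √(Yᴴ Y)` of a complex matrix. -/
noncomputable def traceNorm {m : Type*} [Fintype m] [DecidableEq m]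
    (Y : Matrix m m ℂ) : ℝ :=
  ((Matrix.posSemidef_conjTranspose_mul_self Y).1.eigenvectorUnitary.1 *
    diagonal (((↑) : ℝ → ℂ) ∘ (Real.sqrt ·) ∘ (Matrix.posSemidef_conjTranspose_mul_self Y).1.eigenvalues) *
    (star (Matrix.posSemidef_conjTranspose_mul_self Y).1.eigenvectorUnitary : Matrix m m ℂ)).trace.re

/-- The inner product `⟪x, y⟫ = ∑ i, conj (x i) * y i` on `m → ℂ`. -/
noncomputable def cinner {m : Type*} [Fintype m] (x y : m → ℂ) : ℂ := star x ⬝ᵥ y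

/-- An orthogonal projection: a self-adjoint idempotent matrix. -/
def IsOrthoProj {m : Type*} [Fintype m] (P : Matrix m m ℂ) : Prop :=
  P.IsHermitian ∧ P * P = P

/-- An effect: an operator `S` with `0 ≤ S ≤ 1`. -/
def IsEffect {m : Type*} [Fintype m] [DecidableEq m] (S : Matrix m m ℂ) : Prop :=
  S.PosSemidef ∧ (1 - S).PosSemidef

/-- The rank-one operator `|ψ⟩⟨ψ|`. -/
noncomputable def outer {m : Type*} (ψ : m → ℂ) : Matrix m m ℂ :=
  Matrix.vecMulVec ψ (star ψ)

/-!
Let `X` be the `n × 2` matrix with columns `ψ, φ`, so that `Δ = X diag(p, -q) Xᴴ`. Gram–Schmidt gives a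
thin QR factorization `X = Q R` with `Qᴴ Q = 1` and `R` invertible, hence `Δ = Q B Qᴴ` where
`B = R diag(p, -q) Rᴴ` is a `2 × 2` Hermitian matrix with `det B = -p q |det R|² < 0`. Diagonalizing
`B = U diag(λ₀, λ₁) Uᴴ`, the columns of `Q U` are orthonormal, `Δ = λ₀ |u₀⟩⟨u₀| + λ₁ |u₁⟩⟨u₁|`,
and `λ₀ λ₁ = det B < 0` forces one eigenvalue of each sign.
-/

section
variable {m k : Type*}

lemma mul_diagonal_mul_conjTranspose_eq_sum_outer [Fintype k] [DecidableEq k]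
    (W : Matrix m k ℂ) (d : k → ℂ) :
    W * diagonal d * Wᴴ = ∑ j, d j • outer (fun i => W i j) := by
  ext i i'
  simp [mul_apply, outer, vecMulVec_apply, Matrix.sum_apply, diagonal, mul_assoc, mul_left_comm]

lemma det_mul_mul_conjTranspose [Fintype k] [DecidableEq k] (R D : Matrix k k ℂ) :
    (R * D * Rᴴ).det = D.det * Complex.normSq R.det := by
  rw [det_mul, det_mul, det_conjTranspose, Complex.star_def, Complex.normSq_eq_conj_mul_self]
  ring

variable [Fintype m]

lemma cinner_conj (x y : m → ℂ) : cinner y x = starRingEnd ℂ (cinner x y) := by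
  simp [cinner, dotProduct, map_sum, mul_comm]

lemma cinner_smul_right (a : ℂ) (x y : m → ℂ) : cinner x (a • y) = a * cinner x y :=
  dotProduct_smul a (star x) y

lemma cinner_sub_right (x y z : m → ℂ) : cinner x (y - z) = cinner x y - cinner x z :=
  dotProduct_sub (star x) y z

lemma cinner_col_col (W : Matrix m k ℂ) (a b : k) :
    cinner (fun i => W i a) (fun i => W i b) = (Wᴴ * W) a b := by
  simp [cinner, mul_apply, dotProduct]

lemma exists_cinner_self_eq_one_smul_eq {x : m → ℂ} (hx : x ≠ 0) :
    ∃ (e : m → ℂ) (r : ℂ), cinner e e = 1 ∧ r ≠ 0 ∧ x = r • e := by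
  obtain ⟨N, hN, hxx⟩ := RCLike.pos_iff_exists_ofReal.mp (dotProduct_star_self_pos_iff.mpr hx)
  have hr : (√N : ℂ) ≠ 0 := by exact_mod_cast (Real.sqrt_pos.mpr hN).ne'
  refine ⟨(√N : ℂ)⁻¹ • x, √N, ?_, hr, by rw [smul_smul, mul_inv_cancel₀ hr, one_smul]⟩
  have hsq : (√N : ℂ) ^ 2 = N := by exact_mod_cast Real.sq_sqrt hN.le
  simp only [cinner, star_smul, smul_dotProduct, dotProduct_smul, smul_eq_mul, ← hxx, star_inv₀,
    Complex.star_def, Complex.conj_ofReal]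
  field_simp
  exact hsq.symm

lemma exists_qr_of_linearIndependent_pair {ψ φ : m → ℂ} (hind : LinearIndependent ℂ ![ψ, φ]) :
    ∃ (Q : Matrix m (Fin 2) ℂ) (R : Matrix (Fin 2) (Fin 2) ℂ),
      Qᴴ * Q = 1 ∧ R.det ≠ 0 ∧ (of ![ψ, φ])ᵀ = Q * R := by
  obtain ⟨e₁, a, he₁, ha, rfl⟩ :=
    exists_cinner_self_eq_one_smul_eq (by simpa using hind.ne_zero 0)
  set c := cinner e₁ φ
  have hw : φ - c • e₁ ≠ 0 := by
    intro h
    have := LinearIndependent.pair_iff.mp hind (c * a⁻¹) (-1) (by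
      rw [smul_smul, inv_mul_cancel_right₀ ha, sub_eq_zero.mp h]; simp)
    simp at this
  obtain ⟨e₂, s, he₂, hs, hφ⟩ := exists_cinner_self_eq_one_smul_eq hw
  have h₁₂ : cinner e₁ e₂ = 0 := by
    have := congrArg (cinner e₁) hφ
    rw [cinner_sub_right, cinner_smul_right, cinner_smul_right, he₁, mul_one, sub_self] at this
    exact (mul_eq_zero.mp this.symm).resolve_left hs
  refine ⟨(of ![e₁, e₂])ᵀ, !![a, c; 0, s], ?_, by simp [det_fin_two_of, ha, hs], ?_⟩
  · ext i j
    rw [← cinner_col_col]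
    fin_cases i <;> fin_cases j <;> simp [he₁, he₂, h₁₂, cinner_conj e₁ e₂]
  · rw [sub_eq_iff_eq_add'] at hφ
    ext i j
    fin_cases j <;> simp [mul_apply, Fin.sum_univ_two, hφ, mul_comm]

lemma exists_eq_outer_add_outer_of_det_neg (Q : Matrix m (Fin 2) ℂ) (hQ : Qᴴ * Q = 1)
    {B : Matrix (Fin 2) (Fin 2) ℂ} (hB : B.IsHermitian) (hdet : B.det.re < 0) :
    ∃ (u v : m → ℂ) (lp lm : ℝ), cinner u u = 1 ∧ cinner v v = 1 ∧ cinner u v = 0 ∧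
      0 < lp ∧ lm < 0 ∧ Q * B * Qᴴ = (lp : ℂ) • outer u + (lm : ℂ) • outer v := by
  set W := Q * (hB.eigenvectorUnitary : Matrix (Fin 2) (Fin 2) ℂ)
  have hWW : Wᴴ * W = 1 := by
    simp [W, conjTranspose_mul, Matrix.mul_assoc, ← Matrix.mul_assoc Qᴴ, hQ,
      ← star_eq_conjTranspose]
  have hW (a b : Fin 2) : cinner (fun i => W i a) (fun i => W i b) = (1 : Matrix _ _ ℂ) a b := by
    rw [cinner_col_col, hWW]
  have hdecomp : Q * B * Qᴴ = W * diagonal (fun j => (hB.eigenvalues j : ℂ)) * Wᴴ := by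
    conv_lhs => rw [hB.spectral_theorem]
    simp only [W, conjTranspose_mul]
    simp [Matrix.mul_assoc, star_eq_conjTranspose, Function.comp_def]
  rw [mul_diagonal_mul_conjTranspose_eq_sum_outer, Fin.sum_univ_two] at hdecomp
  have hprod : hB.eigenvalues 0 * hB.eigenvalues 1 < 0 := by
    simpa [hB.det_eq_prod_eigenvalues, Fin.prod_univ_two] using hdet
  rcases mul_neg_iff.mp hprod with ⟨h0, h1⟩ | ⟨h0, h1⟩
  · exact ⟨fun i => W i 0, fun i => W i 1, _, _, by simpa using hW 0 0, by simpa using hW 1 1,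
      by simpa using hW 0 1, h0, h1, hdecomp⟩
  · exact ⟨fun i => W i 1, fun i => W i 0, _, _, by simpa using hW 1 1, by simpa using hW 0 0,
      by simpa using hW 1 0, h1, h0, by rw [hdecomp, add_comm]⟩

end

theorem helstrom_operator_spectral_decomposition_general
    {n : ℕ} (ψ φ : Fin n → ℂ)
    (hind : LinearIndependent ℂ ![ψ, φ])
    (p q : ℝ) (hp : 0 < p) (hq : 0 < q) :
    ∃ (u v : Fin n → ℂ) (lp lm : ℝ),
      cinner u u = 1 ∧ cinner v v = 1 ∧ cinner u v = 0 ∧ 0 < lp ∧ lm < 0 ∧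
      (p : ℂ) • outer ψ - (q : ℂ) • outer φ = (lp : ℂ) • outer u + (lm : ℂ) • outer v := by
  obtain ⟨Q, R, hQ, hR, hX⟩ := exists_qr_of_linearIndependent_pair hind
  set D : Matrix (Fin 2) (Fin 2) ℂ := diagonal ![(p : ℂ), -(q : ℂ)]
  have hΔ : (p : ℂ) • outer ψ - (q : ℂ) • outer φ = Q * (R * D * Rᴴ) * Qᴴ :=
    calc _ = (of ![ψ, φ])ᵀ * D * (of ![ψ, φ])ᵀᴴ := by
          rw [mul_diagonal_mul_conjTranspose_eq_sum_outer]
          simp [Fin.sum_univ_two, sub_eq_add_neg]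
      _ = _ := by rw [hX]; simp [conjTranspose_mul, Matrix.mul_assoc]
  have hD : D.IsHermitian := by simp [D, IsHermitian]
  have hdet : (R * D * Rᴴ).det.re < 0 := by
    rw [det_mul_mul_conjTranspose, det_diagonal, Fin.prod_univ_two]
    simpa [mul_assoc] using mul_pos (mul_pos hp hq) (Complex.normSq_pos.mpr hR)
  rw [hΔ]
  exact exists_eq_outer_add_outer_of_det_neg Q hQ (isHermitian_mul_mul_conjTranspose R hD) hdet

/-- **Spectral decomposition of the Helstrom operator.** For linearly independent unit
vectors `ψ, φ` and `p, q > 0`, the operator `Δ = p|ψ⟩⟨ψ| − q|φ⟩⟨φ|` decomposes as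
`λ₊|u⟩⟨u| + λ₋|v⟩⟨v|` with `u, v` orthonormal and `λ₊ > 0 > λ₋`. -/
theorem helstrom_operator_spectral_decomposition
    {n : ℕ} (ψ φ : Fin n → ℂ) (hψ : cinner ψ ψ = 1) (hφ : cinner φ φ = 1)
    (hind : LinearIndependent ℂ ![ψ, φ])
    (p q : ℝ) (hp : 0 < p) (hq : 0 < q) :
    ∃ (u v : Fin n → ℂ) (lp lm : ℝ),
      cinner u u = 1 ∧ cinner v v = 1 ∧ cinner u v = 0 ∧ 0 < lp ∧ lm < 0 ∧
      (p : ℂ) • outer ψ - (q : ℂ) • outer φ = (lp : ℂ) • outer u + (lm : ℂ) • outer v :=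
  helstrom_operator_spectral_decomposition_general ψ φ hind p q hp hq
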